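/- arXiv:1306.3659 — 3 statements merged into one kernel-verified Lean document; each statement's English description precedes it below -/
import Mathlib

section
/- Let 0 < λ < 1/2 and let U^λ be defined as in the three-region formula above on [0,1] × ℝ. Then for all x ∈ [0,1] and y ∈ ℝ, U^λ(x,y) ≥ (|y| - λ)_+ · (1 - x), where t_+ = max(t,0). -/
/-! Write `a = |y|`, on which `Usmall l x y` depends only. In each of the three regions the
majorization is a polynomial inequality once the logarithm is bounded: `log (2l) ≤ 2l - 1` in the
inner region, `log (x + a) ≤ min 0 (x + a - 1)` in the middle one; in the outer region it is
immediate since `x + a - l ≥ max (a - l) 0`. -/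

noncomputable def Usmall (l : ℝ) (x y : ℝ) : ℝ :=
  if x + |y| ≤ 2*l then (4*l)⁻¹ * (y^2 - x^2) + (l - Real.log (2*l)) * x
  else if x + |y| ≤ 1 then |y| - l + l*x - x * Real.log (x + |y|)
  else (1 - x) * (x + |y| - l)

open Real

lemma Usmall_abs (l x y : ℝ) : Usmall l x |y| = Usmall l x y := by
  simp only [Usmall, abs_abs, sq_abs]

section Regions

variable {l x a : ℝ}

lemma max_sub_mul_le_inner (hl0 : 0 < l) (hl : l < 1/2) (hx : 0 ≤ x) (ha : 0 ≤ a)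
    (hs : x + a ≤ 2*l) :
    max (a - l) 0 * (1 - x) ≤ (4*l)⁻¹ * (a^2 - x^2) + (l - log (2*l)) * x := by
  have hlog : 1 - l ≤ l - log (2*l) := by linarith [log_le_sub_one_of_pos (by linarith : 0 < 2*l)]
  have hpoly : max (a - l) 0 * (1 - x) - (1 - l) * x ≤ (4*l)⁻¹ * (a^2 - x^2) := by
    rw [le_inv_mul_iff₀ (by linarith)]
    rcases le_total a l with hal | hal
    · rw [max_eq_right (by linarith)]
      nlinarith [mul_nonneg hx (by linarith : 0 ≤ 2*l - a - x), mul_nonneg hx ha,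
        mul_nonneg (mul_nonneg hx hl0.le) (by linarith : 0 ≤ 1 - 2*l)]
    · rw [max_eq_left (by linarith)]
      -- the slack is `(a - 2l)^2 + x (4l + 4la - 8l^2 - x)`, and `x ≤ l ≤ a`
      nlinarith [sq_nonneg (a - 2*l), mul_nonneg hx (by nlinarith : 0 ≤ 4*l + 4*l*a - 8*l^2 - x)]
  nlinarith [mul_le_mul_of_nonneg_right hlog hx]

lemma max_sub_mul_le_middle (hl0 : 0 < l) (hx : 0 ≤ x) (ha : 0 ≤ a) (hs₁ : 2*l < x + a)
    (hs₂ : x + a ≤ 1) :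
    max (a - l) 0 * (1 - x) ≤ a - l + l*x - x * log (x + a) := by
  have hlog_nonpos : log (x + a) ≤ 0 := log_nonpos (by linarith) hs₂
  rcases le_total a l with hal | hal
  · rw [max_eq_right (by linarith)]
    have hlog : log (x + a) ≤ x + a - 1 := log_le_sub_one_of_pos (by linarith)
    nlinarith [mul_le_mul_of_nonneg_left hlog hx, mul_nonneg hx ha,
      mul_nonneg (by linarith : 0 ≤ x + a - 2*l) (by linarith : 0 ≤ 1 - (x + a)),
      mul_nonneg ha (by linarith : 0 ≤ x + a - 2*l)]
  · rw [max_eq_left (by linarith)]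
    nlinarith [mul_nonneg hx ha, mul_nonneg hx (neg_nonneg.mpr hlog_nonpos)]

lemma max_sub_mul_le_outer (hl : l < 1/2) (hx₀ : 0 ≤ x) (hx₁ : x ≤ 1) (hs : 1 < x + a) :
    max (a - l) 0 * (1 - x) ≤ (1 - x) * (x + a - l) := by
  rw [mul_comm]
  exact mul_le_mul_of_nonneg_left (max_le (by linarith) (by linarith)) (by linarith)

end Regions

lemma max_sub_mul_le_Usmall {l x a : ℝ} (hl0 : 0 < l) (hl : l < 1/2) (hx : x ∈ Set.Icc (0:ℝ) 1)
    (ha : 0 ≤ a) : max (a - l) 0 * (1 - x) ≤ Usmall l x a := by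
  unfold Usmall
  rw [abs_of_nonneg ha]
  split_ifs with h₁ h₂
  · exact max_sub_mul_le_inner hl0 hl hx.1 ha h₁
  · exact max_sub_mul_le_middle hl0 hx.1 ha (not_le.mp h₁) h₂
  · exact max_sub_mul_le_outer hl hx.1 hx.2 (not_le.mp h₂)

theorem Usmall_majorization (l : ℝ) (hl0 : 0 < l) (hl : l < 1/2) :
    ∀ x y : ℝ, x ∈ Set.Icc (0:ℝ) 1 →
      Usmall l x y ≥ max (|y| - l) 0 * (1 - x) := by
  intro x y hx
  rw [← Usmall_abs]
  exact max_sub_mul_le_Usmall hl0 hl hx (abs_nonneg y)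
end

section
/- Let 0 < λ < 1/2 and suppose 2λ < x + |y| < 1 with x ∈ (0,1), y ∈ ℝ \ {0}. For U^λ(x,y) = |y| - λ + λx - x·ln(x + |y|), the second-order expression ∂_{xx}U^λ·h² + 2∂_{xy}U^λ·hk + ∂_{yy}U^λ·k² equals -(x+|y|)^{-1}(h² - k²) - |y|(x+|y|)^{-2}(h + sgn(y)·k)² for all h, k ∈ ℝ; in particular it is at most -(x+|y|)^{-1}(h² - k²). -/
/-!
Away from the axis `y = 0` the function `|y|` agrees near `y` with the linear function
`sgn(y) * y`, so near `(x, y)` the function `U^λ` coincides with the smooth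
`middleBranch λ s q = s q₂ - λ + λ q₁ - q₁ log (q₁ + s q₂)` for `s = sgn(y)`. Its second derivative
along `(h, k)` is `x (h + s k)² / u² - 2 h (h + s k) / u` with `u = x + s y`, and since `s² = 1`
this rearranges to `-(h² - k²) / u - s y (h + s k)² / u²`; the last term is `≤ 0` because
`s y = |y|`.
-/

open Filter Topology

theorem fderiv_fderiv_apply_congr_of_eventuallyEq {𝕜 E F : Type*} [NontriviallyNormedField 𝕜]
    [NormedAddCommGroup E] [NormedSpace 𝕜 E] [NormedAddCommGroup F] [NormedSpace 𝕜 F]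
    {f g : E → F} {p : E} (hfg : f =ᶠ[𝓝 p] g) (v : E) :
    fderiv 𝕜 (fun q => fderiv 𝕜 f q v) p = fderiv 𝕜 (fun q => fderiv 𝕜 g q v) p :=
  (hfg.fderiv.fun_comp fun L => L v).fderiv_eq

theorem Real.sign_mul_self_eq_abs (r : ℝ) : Real.sign r * r = |r| := by
  rcases lt_trichotomy r 0 with hr | rfl | hr
  · rw [Real.sign_of_neg hr, abs_of_neg hr]; ring
  · simp
  · rw [Real.sign_of_pos hr, abs_of_pos hr]; ring

theorem Real.sign_mul_sign_of_ne_zero {r : ℝ} (hr : r ≠ 0) : Real.sign r * Real.sign r = 1 := by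
  rcases Real.sign_apply_eq_of_ne_zero r hr with h | h <;> rw [h] <;> norm_num

theorem abs_eventuallyEq_sign_mul {y : ℝ} (hy : y ≠ 0) :
    (fun t : ℝ => |t|) =ᶠ[𝓝 y] fun t => Real.sign y * t := by
  rcases hy.lt_or_gt with hy | hy
  · filter_upwards [eventually_lt_nhds hy] with t ht
    rw [abs_of_neg ht, Real.sign_of_neg hy]; ring
  · filter_upwards [eventually_gt_nhds hy] with t ht
    rw [abs_of_pos ht, Real.sign_of_pos hy]; ring

noncomputable def middleBranch (l s : ℝ) (q : ℝ × ℝ) : ℝ :=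
  s * q.2 - l + l * q.1 - q.1 * Real.log (q.1 + s * q.2)

section middleBranch

variable (l s h k : ℝ)

theorem fderiv_middleBranch_apply {q : ℝ × ℝ} (hq : q.1 + s * q.2 ≠ 0) :
    fderiv ℝ (middleBranch l s) q (h, k) =
      s * k + l * h - (h * Real.log (q.1 + s * q.2) + q.1 * ((h + s * k) / (q.1 + s * q.2))) := by
  have hu : HasFDerivAt (fun q : ℝ × ℝ => q.1 + s * q.2)
      (ContinuousLinearMap.fst ℝ ℝ ℝ + s • ContinuousLinearMap.snd ℝ ℝ ℝ) q :=
    hasFDerivAt_fst.add (hasFDerivAt_snd.const_mul s)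
  have hF := (((hasFDerivAt_snd.const_mul s).sub_const l).add (hasFDerivAt_fst.const_mul l)).sub
    (hasFDerivAt_fst.mul (hu.log hq))
  rw [(hF.congr_of_eventuallyEq (f₁ := middleBranch l s) (.of_forall fun _ => rfl)).fderiv]
  simp only [smul_add, sub_apply, add_apply, smul_apply, ContinuousLinearMap.coe_snd', smul_eq_mul,
    ContinuousLinearMap.coe_fst', sub_right_inj]
  ring

theorem fderiv_fderiv_middleBranch_apply {p : ℝ × ℝ} (hp : p.1 + s * p.2 ≠ 0) :
    fderiv ℝ (fun q => fderiv ℝ (middleBranch l s) q (h, k)) p (h, k) =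
      p.1 * (h + s * k) ^ 2 / (p.1 + s * p.2) ^ 2 - 2 * h * (h + s * k) / (p.1 + s * p.2) := by
  have hopen : IsOpen {q : ℝ × ℝ | q.1 + s * q.2 ≠ 0} :=
    isOpen_ne_fun (continuous_fst.add (continuous_const.mul continuous_snd)) continuous_const
  have hu : HasFDerivAt (fun q : ℝ × ℝ => q.1 + s * q.2)
      (ContinuousLinearMap.fst ℝ ℝ ℝ + s • ContinuousLinearMap.snd ℝ ℝ ℝ) p :=
    hasFDerivAt_fst.add (hasFDerivAt_snd.const_mul s)
  have hG := (hasFDerivAt_const (s * k + l * h) p).sub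
    (((hu.log hp).const_mul h).add
      (hasFDerivAt_fst.mul (((hasDerivAt_inv hp).comp_hasFDerivAt p hu).const_mul (h + s * k))))
  have hD := hG.congr_of_eventuallyEq (f₁ := fun q => fderiv ℝ (middleBranch l s) q (h, k)) <| by
    filter_upwards [hopen.mem_nhds hp] with q hq
    rw [fderiv_middleBranch_apply l s h k hq]
    simp only [Pi.sub_apply, Pi.add_apply, Pi.mul_apply, Function.comp_apply]
    ring
  rw [hD.fderiv]
  simp only [smul_add, neg_smul, smul_neg, Function.comp_apply, zero_sub, neg_add_rev, neg_neg,
    add_apply, neg_apply, smul_apply, ContinuousLinearMap.coe_fst', smul_eq_mul,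
    ContinuousLinearMap.coe_snd']
  field_simp
  ring

theorem fderiv_fderiv_middleBranch_apply_of_mul_self_eq_one (hs : s * s = 1) {x y : ℝ}
    (hu : x + s * y ≠ 0) :
    fderiv ℝ (fun q => fderiv ℝ (middleBranch l s) q (h, k)) (x, y) (h, k) =
      -(x + s * y)⁻¹ * (h ^ 2 - k ^ 2) - s * y / (x + s * y) ^ 2 * (h + s * k) ^ 2 := by
  rw [fderiv_fderiv_middleBranch_apply l s h k hu]
  field_simp
  linear_combination k ^ 2 * (x + s * y) * hs

end middleBranch

theorem hessian_middle_region_general (l x y h k : ℝ)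
    (hx : x ∈ Set.Ioo (0:ℝ) 1) (hy : y ≠ 0) :
    (fderiv ℝ (fun p : ℝ × ℝ =>
        fderiv ℝ (fun q : ℝ × ℝ => |q.2| - l + l*q.1 - q.1 * Real.log (q.1 + |q.2|)) p (h, k))
      (x, y)) (h, k)
      = -(x + |y|)⁻¹ * (h^2 - k^2) - |y| / (x + |y|)^2 * (h + Real.sign y * k)^2 ∧
    (fderiv ℝ (fun p : ℝ × ℝ =>
        fderiv ℝ (fun q : ℝ × ℝ => |q.2| - l + l*q.1 - q.1 * Real.log (q.1 + |q.2|)) p (h, k))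
      (x, y)) (h, k)
      ≤ -(x + |y|)⁻¹ * (h^2 - k^2) := by
  have hsy : Real.sign y * y = |y| := Real.sign_mul_self_eq_abs y
  have hu : x + |y| ≠ 0 := by have := hx.1; positivity
  have hgerm : (fun q : ℝ × ℝ => |q.2| - l + l*q.1 - q.1 * Real.log (q.1 + |q.2|))
      =ᶠ[𝓝 (x, y)] middleBranch l (Real.sign y) := by
    filter_upwards [(abs_eventuallyEq_sign_mul hy).comp_tendsto (continuous_snd.tendsto (x, y))]
      with q hq
    simp only [Function.comp_apply] at hq
    rw [middleBranch, hq]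
  rw [fderiv_fderiv_apply_congr_of_eventuallyEq hgerm,
    fderiv_fderiv_middleBranch_apply_of_mul_self_eq_one l _ h k
      (Real.sign_mul_sign_of_ne_zero hy) (hsy ▸ hu), hsy]
  refine ⟨rfl, ?_⟩
  have hcorr : 0 ≤ |y| / (x + |y|) ^ 2 * (h + Real.sign y * k) ^ 2 := by positivity
  linarith

theorem hessian_middle_region (l x y h k : ℝ) (hl0 : 0 < l) (hl : l < 1/2)
    (hx : x ∈ Set.Ioo (0:ℝ) 1) (hy : y ≠ 0)
    (hreg1 : 2*l < x + |y|) (hreg2 : x + |y| < 1) :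
    (fderiv ℝ (fun p : ℝ × ℝ =>
        fderiv ℝ (fun q : ℝ × ℝ => |q.2| - l + l*q.1 - q.1 * Real.log (q.1 + |q.2|)) p (h, k))
      (x, y)) (h, k)
      = -(x + |y|)⁻¹ * (h^2 - k^2) - |y| / (x + |y|)^2 * (h + Real.sign y * k)^2 ∧
    (fderiv ℝ (fun p : ℝ × ℝ =>
        fderiv ℝ (fun q : ℝ × ℝ => |q.2| - l + l*q.1 - q.1 * Real.log (q.1 + |q.2|)) p (h, k))
      (x, y)) (h, k)
      ≤ -(x + |y|)⁻¹ * (h^2 - k^2) :=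
  hessian_middle_region_general l x y h k hx hy
end

section
/- Let ε be a Rademacher random variable (P(ε=1)=P(ε=-1)=1/2). Define the two-step martingale f_0 = g_0 = 1/2, f_1 = 1/2 + ε/2, g_1 = 1/2 - ε/2 (so g_1 - g_0 = -(f_1 - f_0)). Then f takes values in [0,1], g is differentially subordinate to f (|g_0| ≤ |f_0| and |dg_1| = |df_1|), E[f_1] = 1/2, and E[|g_1|·(1 - f_1)] = 1/2 = E[f_1]·ln(e/(2·E[f_1])). -/
/-! A Rademacher variable is `±1` almost surely, so the integral of any function `φ ∘ ε` is
`(φ 1 + φ (-1)) / 2`. Here `f₁ = 1`, `g₁ = 0` on `{ε = 1}` and `f₁ = 0`, `g₁ = 1` on `{ε = -1}`,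
so `g₁ (1 - f₁)` is the indicator of `{ε = -1}`. -/

open MeasureTheory

section TwoValued

variable {Ω : Type*} [MeasurableSpace Ω] {μ : Measure Ω} {e : Ω → ℝ} {a b : ℝ}

lemma ae_eq_or_eq_of_measure_add_measure_eq_one [IsProbabilityMeasure μ] (he : Measurable e)
    (hab : a ≠ b) (h : μ {ω | e ω = a} + μ {ω | e ω = b} = 1) :
    ∀ᵐ ω ∂μ, e ω = a ∨ e ω = b := by
  have hdisj : Disjoint {ω | e ω = a} {ω | e ω = b} :=
    Set.disjoint_left.mpr fun ω ha hb => hab (ha.symm.trans hb)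
  have hmeas : MeasurableSet {ω | e ω = a ∨ e ω = b} :=
    (he (measurableSet_singleton a)).union (he (measurableSet_singleton b))
  rw [ae_iff_measure_eq hmeas.nullMeasurableSet, measure_univ, Set.ofPred_or,
    measure_union hdisj (he (measurableSet_singleton b)), h]

lemma integral_comp_of_ae_eq_or_eq [IsFiniteMeasure μ] (he : Measurable e) (hab : a ≠ b)
    (hae : ∀ᵐ ω ∂μ, e ω = a ∨ e ω = b) (φ : ℝ → ℝ) :
    ∫ ω, φ (e ω) ∂μ = μ.real {ω | e ω = a} * φ a + μ.real {ω | e ω = b} * φ b := by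
  have hA : MeasurableSet {ω | e ω = a} := he (measurableSet_singleton a)
  have hB : MeasurableSet {ω | e ω = b} := he (measurableSet_singleton b)
  have hsplit : (fun ω => φ (e ω)) =ᵐ[μ]
      {ω | e ω = a}.indicator (fun _ => φ a) + {ω | e ω = b}.indicator (fun _ => φ b) := by
    filter_upwards [hae] with ω hω
    rcases hω with hω | hω <;> simp [hω, hab, hab.symm]
  rw [integral_congr_ae hsplit, integral_add' ((integrable_const _).indicator hA)
    ((integrable_const _).indicator hB), integral_indicator_const _ hA,
    integral_indicator_const _ hB, smul_eq_mul, smul_eq_mul]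

end TwoValued

section Rademacher

variable {Ω : Type*} [MeasurableSpace Ω] {μ : Measure Ω} [IsProbabilityMeasure μ] {e : Ω → ℝ}

lemma ae_eq_one_or_eq_neg_one_of_rademacher (he : Measurable e)
    (h1 : μ {ω | e ω = 1} = 1/2) (h2 : μ {ω | e ω = -1} = 1/2) :
    ∀ᵐ ω ∂μ, e ω = 1 ∨ e ω = -1 :=
  ae_eq_or_eq_of_measure_add_measure_eq_one he (by norm_num) (by rw [h1, h2, ENNReal.add_halves])

lemma integral_comp_of_rademacher (he : Measurable e)
    (h1 : μ {ω | e ω = 1} = 1/2) (h2 : μ {ω | e ω = -1} = 1/2) (φ : ℝ → ℝ) :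
    ∫ ω, φ (e ω) ∂μ = (φ 1 + φ (-1)) / 2 := by
  rw [integral_comp_of_ae_eq_or_eq he (by norm_num)
    (ae_eq_one_or_eq_neg_one_of_rademacher he h1 h2), measureReal_def, measureReal_def, h1, h2]
  simp only [one_div, ENNReal.toReal_inv, ENNReal.toReal_ofNat]
  ring

end Rademacher

theorem rademacher_example {Ω : Type*} [MeasurableSpace Ω] (μ : Measure Ω)
    [IsProbabilityMeasure μ] (e : Ω → ℝ) (he : Measurable e)
    (h1 : μ {ω | e ω = 1} = 1/2) (h2 : μ {ω | e ω = -1} = 1/2) :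
    (∀ᵐ ω ∂μ, (1/2 + e ω / 2) ∈ Set.Icc (0:ℝ) 1) ∧
    (∀ ω, |(1/2 - e ω / 2) - 1/2| = |(1/2 + e ω / 2) - 1/2|) ∧
    (∫ ω, (1/2 + e ω / 2) ∂μ = 1/2) ∧
    (∫ ω, |1/2 - e ω / 2| * (1 - (1/2 + e ω / 2)) ∂μ = 1/2) ∧
    ((1/2 : ℝ) = (∫ ω, (1/2 + e ω / 2) ∂μ) *
        Real.log (Real.exp 1 / (2 * ∫ ω, (1/2 + e ω / 2) ∂μ))) := by
  have hf : ∫ ω, (1/2 + e ω / 2) ∂μ = 1/2 := by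
    rw [integral_comp_of_rademacher he h1 h2 (fun x => 1/2 + x/2)]; norm_num
  have hg : ∫ ω, |1/2 - e ω / 2| * (1 - (1/2 + e ω / 2)) ∂μ = 1/2 := by
    rw [integral_comp_of_rademacher he h1 h2 (fun x => |1/2 - x/2| * (1 - (1/2 + x/2)))]
    norm_num
  refine ⟨?_, fun ω => ?_, hf, hg, ?_⟩
  · filter_upwards [ae_eq_one_or_eq_neg_one_of_rademacher he h1 h2] with ω hω
    rcases hω with hω | hω <;> norm_num [hω]
  · rw [show 1/2 - e ω / 2 - 1/2 = -(1/2 + e ω / 2 - 1/2) by ring, abs_neg]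
  · rw [hf]; norm_num [Real.log_exp]
end
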